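/- arXiv:2206.03549 — 3 statements merged into one kernel-verified Lean document; each statement's English description precedes it below -/
import Mathlib

section
/- Let X be a rational elliptic surface and [D] ∈ NS(X) a conic class with D effective. Then every irreducible curve E in the support of D satisfies E² ≤ 0 and p_a(E) = 0 (i.e. E is a smooth rational curve). -/
/-- Intersection number of a divisor with an irreducible curve,
    for an intersection pairing `b` on irreducible curves. -/
def dcur {Curve : Type*} (b : Curve → Curve → ℤ) (D : Curve →₀ ℤ) (c : Curve) : ℤ :=
  D.sum fun c' m => m * b c' c

/-- Intersection number of two divisors. -/
def dpair {Curve : Type*} (b : Curve → Curve → ℤ) (D E : Curve →₀ ℤ) : ℤ :=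
  D.sum fun c m => m * dcur b E c

/-- Abstract model of a rational elliptic surface with elliptic fibration `π : X → ℙ¹`:
    a type of irreducible curves with an intersection pairing, a canonical divisor,
    arithmetic genera, the fibers of `π`, and cohomology dimensions, satisfying the
    standard numerical facts. -/
structure RES where
  Curve : Type
  T : Type
  tne : Nonempty T
  b : Curve → Curve → ℤ
  K : Curve →₀ ℤ
  pa : Curve → ℕ
  fib : T → Curve →₀ ℤ
  h0 : (Curve →₀ ℤ) → ℕ
  h1 : (Curve →₀ ℤ) → ℕ
  h2 : (Curve →₀ ℤ) → ℕ
  symm : ∀ c c', b c c' = b c' c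
  nonneg : ∀ c c', c ≠ c' → 0 ≤ b c c'
  adj : ∀ c, 2 * (pa c : ℤ) - 2 = b c c + dcur b K c
  nefK : ∀ c, dcur b K c ≤ 0
  fib_eff : ∀ t, (0 : Curve →₀ ℤ) ≤ fib t
  anti : ∀ t c, dcur b (fib t) c = - dcur b K c
  cover : ∀ c, (∃ t, c ∈ (fib t).support) ∨ (∀ t, 0 < dcur b (fib t) c)
  kodaira : ∀ t, (∃ c, fib t = Finsupp.single c 1) ∨ (∀ c ∈ (fib t).support, b c c = -2 ∧ pa c = 0)
  hodge : ∀ D c, 0 < b c c → dpair b D D = 0 → dcur b D c = 0 → ∀ c', dcur b D c' = 0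
  numfib : ∀ c, b c c = 0 → dcur b K c = 0 → ∀ c', b c c' = - dcur b K c'
  rr : ∀ D, 2 * ((h0 D : ℤ) - h1 D + h2 D) = 2 + dpair b D D - dpair b D K
  serre : ∀ D, h2 D = h0 (K - D)
  vanish : ∀ D, (∀ c, 0 ≤ dcur b D c) → 1 ≤ -(dpair b D K) → h1 D = 0
  eff_of_h0 : ∀ D, 1 ≤ h0 D → ∃ D', 0 ≤ D' ∧ ∀ c, dcur b D' c = dcur b D c

/-- A conic class: nef, self-intersection 0, and `D·(−K) = 2`. -/
def RES.ConicClass (S : RES) (D : S.Curve →₀ ℤ) : Prop :=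
  (∀ c, 0 ≤ dcur S.b D c) ∧ dpair S.b D D = 0 ∧ dpair S.b D S.K = -2

/-- A section of the elliptic fibration: meets every fiber with intersection number 1. -/
def RES.IsSection (S : RES) (c : S.Curve) : Prop := ∀ t, dcur S.b (S.fib t) c = 1

/-- A `(−1)`-curve: smooth rational with self-intersection −1. -/
def RES.Neg1 (S : RES) (c : S.Curve) : Prop := S.pa c = 0 ∧ S.b c c = -1

/-- A `(−2)`-curve: smooth rational with self-intersection −2. -/
def RES.Neg2 (S : RES) (c : S.Curve) : Prop := S.pa c = 0 ∧ S.b c c = -2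

/-- Connectedness of (the intersection graph of) an effective divisor. -/
def RES.Connected (S : RES) (D : S.Curve →₀ ℤ) : Prop :=
  ∀ s : Finset S.Curve, s ⊆ D.support → s.Nonempty → s ≠ D.support →
    ∃ c ∈ s, ∃ c', c' ∈ D.support ∧ c' ∉ s ∧ S.b c c' ≠ 0


lemma dpair_comm' {Curve : Type*} (b : Curve → Curve → ℤ)
    (hsymm : ∀ c c', b c c' = b c' c) (D E : Curve →₀ ℤ) :
    dpair b D E = dpair b E D := by
  unfold dpair dcur Finsupp.sum
  simp only [Finset.mul_sum]
  rw [Finset.sum_comm]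
  exact Finset.sum_congr rfl fun c _ => Finset.sum_congr rfl fun c' _ => by rw [hsymm]; ring

/-- If `[D]` is a conic class with `D` effective, then every
irreducible curve `E` in the support of `D` satisfies `E² ≤ 0` and `p_a(E) = 0`
(i.e. `E` is a smooth rational curve). -/
theorem stmt_7 (S : RES) (D : S.Curve →₀ ℤ)
    (heff : (0 : S.Curve →₀ ℤ) ≤ D) (hD : S.ConicClass D) :
    ∀ c ∈ D.support, S.b c c ≤ 0 ∧ S.pa c = 0 := by
  obtain ⟨hnef, hDD, hDK⟩ := hD
  have hDpos : ∀ c, 0 ≤ D c := fun c => by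
    have := Finsupp.le_def.mp heff c; simpa using this
  have hzero : ∀ c ∈ D.support, dcur S.b D c = 0 := by
    intro c hc
    have hsum : ∑ x ∈ D.support, D x * dcur S.b D x = 0 := by
      simpa [dpair, Finsupp.sum] using hDD
    have h := (Finset.sum_eq_zero_iff_of_nonneg
      (fun x _ => mul_nonneg (hDpos x) (hnef x))).mp hsum c hc
    rcases mul_eq_zero.mp h with h | h
    · exact absurd h (Finsupp.mem_support_iff.mp hc)
    · exact h
  have hDK' : ∑ x ∈ D.support, D x * dcur S.b S.K x = -2 := by
    simpa [dpair, Finsupp.sum] using hDK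
  intro c hc
  have hb : S.b c c ≤ 0 := by
    by_contra h
    push_neg at h
    have hall := S.hodge D c h hDD (hzero c hc)
    have hz : dpair S.b S.K D = 0 := by
      unfold dpair
      rw [Finsupp.sum]
      exact Finset.sum_eq_zero fun x _ => by rw [hall x]; ring
    rw [← dpair_comm' S.b S.symm D S.K] at hz
    omega
  refine ⟨hb, ?_⟩
  have hadj := S.adj c
  have hK := S.nefK c
  by_contra hpa
  have hb0 : S.b c c = 0 := by omega
  have hK0 : dcur S.b S.K c = 0 := by omega
  have hnf := S.numfib c hb0 hK0
  have h2 : dcur S.b D c = 2 := by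
    unfold dcur
    rw [Finsupp.sum]
    rw [Finset.sum_congr rfl (fun x _ => show D x * S.b x c = -(D x * dcur S.b S.K x) by
      rw [S.symm x c, hnf x]; ring)]
    rw [Finset.sum_neg_distrib, hDK']
    norm_num
  have := hzero c hc
  omega
end

section
/- Let X be a rational elliptic surface with elliptic fibration π, let φ: X → ℙ¹ be a conic bundle, and let D be a connected reducible fiber of φ supported on negative curves. Then D = P₁ + P₂ + D', where P₁, P₂ are (−1)-curves (sections of π, not necessarily distinct) and D' is an effective divisor (possibly zero) supported on (−2)-curves. -/
/-- A connected reducible fiber `D` of a conic bundle supported on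
negative curves decomposes as `D = P₁ + P₂ + D'`, where `P₁, P₂` are
`(−1)`-curves (sections of `π`, not necessarily distinct) and `D'` is an
effective divisor (possibly zero) supported on `(−2)`-curves (components of
fibers of `π`). -/
theorem stmt_10 (S : RES) (D : S.Curve →₀ ℤ)
    (heff : (0 : S.Curve →₀ ℤ) ≤ D) (hconic : S.ConicClass D)
    (hconn : S.Connected D)
    (hred : ¬∃ c : S.Curve, D = Finsupp.single c 1)
    (hneg : ∀ c ∈ D.support, S.b c c < 0) :
    ∃ (P₁ P₂ : S.Curve) (D' : S.Curve →₀ ℤ),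
      S.Neg1 P₁ ∧ S.Neg1 P₂ ∧ S.IsSection P₁ ∧ S.IsSection P₂ ∧
      (0 : S.Curve →₀ ℤ) ≤ D' ∧ (∀ c ∈ D'.support, S.Neg2 c) ∧
      (∀ c ∈ D'.support, ∃ t, c ∈ (S.fib t).support) ∧
      D = Finsupp.single P₁ 1 + Finsupp.single P₂ 1 + D' := by

  classical
  obtain ⟨hnef, hDD, hDK⟩ := hconic
  have heffc : ∀ c, 0 ≤ D c := fun c => Finsupp.le_def.mp heff c
  -- dichotomy for support curves
  have dich : ∀ c ∈ D.support,
      (S.pa c = 0 ∧ S.b c c = -1 ∧ dcur S.b S.K c = -1) ∨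
      (S.pa c = 0 ∧ S.b c c = -2 ∧ dcur S.b S.K c = 0) := by
    intro c hc
    have h1 := hneg c hc
    have h2 := S.nefK c
    have h3 := S.adj c
    omega
  set A := D.support.filter (fun c => dcur S.b S.K c = -1) with hAdef
  have hApos : ∀ c ∈ A, 1 ≤ D c := by
    intro c hc
    have h1 := Finsupp.mem_support_iff.mp (Finset.mem_filter.mp hc).1
    have h2 := heffc c
    omega
  have hsupK : ∀ c ∈ D.support, c ∉ A → dcur S.b S.K c = 0 := by
    intro c hc hca
    rcases dich c hc with ⟨_, _, h⟩ | ⟨_, _, h⟩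
    · exact absurd (Finset.mem_filter.mpr ⟨hc, h⟩) hca
    · exact h
  have hA2 : ∑ c ∈ A, D c = 2 := by
    have e1 : ∑ c ∈ D.support, D c * dcur S.b S.K c = -2 := hDK
    rw [← Finset.sum_filter_add_sum_filter_not D.support
      (fun c => dcur S.b S.K c = -1)] at e1
    have e2 : ∑ c ∈ A, D c * dcur S.b S.K c = ∑ c ∈ A, -(D c) := by
      refine Finset.sum_congr rfl fun c hc => ?_
      rw [(Finset.mem_filter.mp hc).2]; ring
    have e3 : ∑ c ∈ D.support.filter (fun c => ¬ dcur S.b S.K c = -1),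
        D c * dcur S.b S.K c = 0 := by
      refine Finset.sum_eq_zero fun c hc => ?_
      obtain ⟨hc1, hc2⟩ := Finset.mem_filter.mp hc
      rw [hsupK c hc1 (by simp [hAdef, hc2, hc1])]
      ring
    rw [e2, e3, Finset.sum_neg_distrib] at e1
    omega
  have hne : A.Nonempty := by
    by_contra h
    rw [Finset.not_nonempty_iff_eq_empty] at h
    rw [h, Finset.sum_empty] at hA2
    omega
  have hcard_le : (A.card : ℤ) ≤ 2 := by
    have h := Finset.card_nsmul_le_sum A (fun c => D c) 1 hApos
    simpa [hA2] using h
  have hc12 : A.card = 1 ∨ A.card = 2 := by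
    have h1 := Finset.card_pos.mpr hne
    omega
  have hmemA : ∀ c ∈ A, S.Neg1 c ∧ dcur S.b S.K c = -1 := by
    intro c hc
    obtain ⟨hc1, hc2⟩ := Finset.mem_filter.mp hc
    rcases dich c hc1 with ⟨h1, h2, h3⟩ | ⟨h1, h2, h3⟩
    · exact ⟨⟨h1, h2⟩, h3⟩
    · omega
  suffices h : ∀ P₁ P₂ : S.Curve, P₁ ∈ A → P₂ ∈ A →
      (∀ c, (Finsupp.single P₁ 1 + Finsupp.single P₂ 1 : S.Curve →₀ ℤ) c
        = if c ∈ A then D c else 0) →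
      ∃ (P₁ P₂ : S.Curve) (D' : S.Curve →₀ ℤ),
        S.Neg1 P₁ ∧ S.Neg1 P₂ ∧ S.IsSection P₁ ∧ S.IsSection P₂ ∧
        (0 : S.Curve →₀ ℤ) ≤ D' ∧ (∀ c ∈ D'.support, S.Neg2 c) ∧
        (∀ c ∈ D'.support, ∃ t, c ∈ (S.fib t).support) ∧
        D = Finsupp.single P₁ 1 + Finsupp.single P₂ 1 + D' by
    rcases hc12 with h1 | h2
    · obtain ⟨P, hP⟩ := Finset.card_eq_one.mp h1
      have hPA : P ∈ A := hP ▸ Finset.mem_singleton_self P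
      have hDP : D P = 2 := by rw [hP, Finset.sum_singleton] at hA2; exact hA2
      refine h P P hPA hPA fun c => ?_
      by_cases hc : c = P
      · subst hc; simp [hP, hDP]
      · simp [Finsupp.single_apply, hP, hc, Ne.symm hc]
    · obtain ⟨P₁, P₂, hne12, hP⟩ := Finset.card_eq_two.mp h2
      have h1A : P₁ ∈ A := by rw [hP]; simp
      have h2A : P₂ ∈ A := by rw [hP]; simp
      have hs : D P₁ + D P₂ = 2 := by
        rw [hP, Finset.sum_pair hne12] at hA2; exact hA2
      have hp1 := hApos P₁ h1A
      have hp2 := hApos P₂ h2A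
      have hD1 : D P₁ = 1 := by omega
      have hD2 : D P₂ = 1 := by omega
      refine h P₁ P₂ h1A h2A fun c => ?_
      by_cases hc1 : c = P₁
      · subst hc1; simp [Finsupp.single_apply, hP, hne12, Ne.symm hne12, hD1]
      · by_cases hc2 : c = P₂
        · subst hc2; simp [Finsupp.single_apply, hP, hne12, Ne.symm hne12, hD2]
        · simp [Finsupp.single_apply, hP, Ne.symm hc1, Ne.symm hc2, hc1, hc2]
  intro P₁ P₂ hP₁ hP₂ hE
  set E : S.Curve →₀ ℤ := Finsupp.single P₁ 1 + Finsupp.single P₂ 1 with hEdef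
  obtain ⟨hN1, hK1⟩ := hmemA P₁ hP₁
  obtain ⟨hN2, hK2⟩ := hmemA P₂ hP₂
  have hsupp' : ∀ c ∈ (D - E).support, c ∈ D.support ∧ c ∉ A := by
    intro c hc
    have hcne := Finsupp.mem_support_iff.mp hc
    rw [Finsupp.sub_apply] at hcne
    by_cases hcA : c ∈ A
    · exact absurd (by rw [hE c, if_pos hcA]; ring) hcne
    · have hE0 : E c = 0 := by rw [hE c, if_neg hcA]
      rw [hE0, sub_zero] at hcne
      exact ⟨Finsupp.mem_support_iff.mpr hcne, hcA⟩
  refine ⟨P₁, P₂, D - E, hN1, hN2, ?_, ?_, ?_, ?_, ?_, ?_⟩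
  · intro t; rw [S.anti t P₁, hK1]; ring
  · intro t; rw [S.anti t P₂, hK2]; ring
  · rw [Finsupp.le_def]
    intro c
    rw [Finsupp.coe_zero, Pi.zero_apply, Finsupp.sub_apply]
    by_cases hcA : c ∈ A
    · rw [hE c, if_pos hcA]; omega
    · rw [hE c, if_neg hcA, sub_zero]; exact heffc c
  · intro c hc
    obtain ⟨hc1, hc2⟩ := hsupp' c hc
    rcases dich c hc1 with ⟨_, _, h3⟩ | ⟨h1, h2, _⟩
    · exact absurd (Finset.mem_filter.mpr ⟨hc1, h3⟩) hc2
    · exact ⟨h1, h2⟩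
  · intro c hc
    obtain ⟨hc1, hc2⟩ := hsupp' c hc
    have hK0 := hsupK c hc1 hc2
    rcases S.cover c with h | h
    · exact h
    · obtain ⟨t⟩ := S.tne
      have := h t
      rw [S.anti t c, hK0] at this
      omega
  · ext c
    rw [Finsupp.add_apply, Finsupp.sub_apply]
    ring
end

section
/- Let D = P₁ + P₂ + Σᵢ nᵢCᵢ be a connected fiber of a conic bundle on a rational elliptic surface, where P₁ ≠ P₂ are (−1)-curves, the Cᵢ are (−2)-curves, and P₁, P₂ do not meet. Then the intersection graph of D is a chain P₁, C₁, …, C_k, P₂ with all multiplicities nᵢ = 1 (type Aₙ, n ≥ 3). -/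
open scoped Classical


lemma extract_one {α : Type} [DecidableEq α] (s : Finset α) (f : α → ℤ)
    (h0 : ∀ a ∈ s, 0 ≤ f a) (h1 : ∑ a ∈ s, f a = 1) :
    ∃ a ∈ s, f a = 1 ∧ ∀ c ∈ s, c ≠ a → f c = 0 := by
  have hex : ∃ a ∈ s, f a ≠ 0 := by
    by_contra h
    push_neg at h
    simp [Finset.sum_eq_zero h] at h1
  obtain ⟨a, ha, hfa⟩ := hex
  have hsplit : f a + ∑ c ∈ s.erase a, f c = 1 := by
    rw [Finset.add_sum_erase s f ha]; exact h1
  have hrest : 0 ≤ ∑ c ∈ s.erase a, f c :=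
    Finset.sum_nonneg fun c hc => h0 c (Finset.mem_of_mem_erase hc)
  have hfa1 : f a = 1 := by have := h0 a ha; omega
  refine ⟨a, ha, hfa1, ?_⟩
  have hz : ∑ c ∈ s.erase a, f c = 0 := by omega
  intro c hc hca
  exact (Finset.sum_eq_zero_iff_of_nonneg
    (fun c hc => h0 c (Finset.mem_of_mem_erase hc))).1 hz c (Finset.mem_erase.2 ⟨hca, hc⟩)

lemma injective_snoc {α : Type} {k : ℕ} (C : Fin k → α) (a : α)
    (hC : Function.Injective C) (ha : ∀ i, C i ≠ a) :
    Function.Injective (Fin.snoc C a : Fin (k+1) → α) := by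
  intro i j hij
  rcases Fin.eq_castSucc_or_eq_last i with ⟨i', rfl⟩ | rfl <;>
    rcases Fin.eq_castSucc_or_eq_last j with ⟨j', rfl⟩ | rfl
  · simp only [Fin.snoc_castSucc] at hij
    exact congrArg Fin.castSucc (hC hij)
  · simp only [Fin.snoc_castSucc, Fin.snoc_last] at hij
    exact absurd hij (ha i')
  · simp only [Fin.snoc_castSucc, Fin.snoc_last] at hij
    exact absurd hij.symm (ha j')
  · rfl

def PartialChain {α : Type} (b : α → α → ℤ) (n : α → ℤ) (s : Finset α) (P₁ P₂ : α)
    (k : ℕ) (C : Fin k → α) : Prop :=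
  Function.Injective C ∧
  (∀ i, C i ∈ s) ∧
  (∀ i, n (C i) = 1) ∧
  (∀ i : Fin k, (i : ℕ) = 0 → b P₁ (C i) = 1) ∧
  (∀ i : Fin k, (i : ℕ) + 1 < k → b P₂ (C i) = 0) ∧
  (∀ i j : Fin k, (i : ℕ) + 1 = (j : ℕ) → b (C i) (C j) = 1) ∧
  (∀ i : Fin k, (i : ℕ) + 1 < k → ∀ d ∈ s, d ≠ C i → b d (C i) ≠ 0 →
      ∃ j : Fin k, ((j : ℕ) + 1 = (i : ℕ) ∨ (i : ℕ) + 1 = (j : ℕ)) ∧ d = C j)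

lemma chain_step {α : Type} [DecidableEq α] (b : α → α → ℤ) (n : α → ℤ) (s : Finset α)
    (P₁ P₂ c₀ : α) (hP₁s : P₁ ∉ s) (hP₂s : P₂ ∉ s)
    (hsymm : ∀ c c', b c c' = b c' c)
    (hnn : ∀ c c', c ≠ c' → 0 ≤ b c c')
    (hn1 : ∀ c ∈ s, 1 ≤ n c)
    (e3 : ∀ C ∈ s, b P₁ C + b P₂ C + ∑ c ∈ s.erase C, n c * b c C = 2 * n C)
    (u1 : ∀ c ∈ s, b c P₁ ≠ 0 → c = c₀)
    (k : ℕ) (hk : 0 < k) (C : Fin k → α) (h : PartialChain b n s P₁ P₂ k C) :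
    (∀ i : Fin k, (i : ℕ) = k - 1 → b P₂ (C i) = 1 ∧
        ∀ d ∈ s, (∀ j, d ≠ C j) → b d (C i) = 0) ∨
    ∃ C' : Fin (k+1) → α, PartialChain b n s P₁ P₂ (k+1) C' := by
  obtain ⟨hinj, hmem, hn, hP1, hP2, hadj, hclosed⟩ := h
  set iz : Fin k := ⟨k-1, by omega⟩ with hiz
  have hizval : (iz : ℕ) = k - 1 := rfl
  set z := C iz with hz
  have hzmem : z ∈ s := hmem iz
  have hzP₂ : P₂ ≠ z := fun h => hP₂s (h ▸ hzmem)
  -- the residual equation over a set T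
  have main : ∃ T : Finset α, T ⊆ s.erase z ∧
      (b P₂ z + ∑ c ∈ T, n c * b c z = 1) ∧
      (∀ d ∈ s.erase z, d ∉ T → ∃ jy : Fin k, (jy : ℕ) + 2 = k ∧ d = C jy) ∧
      (∀ jy : Fin k, (jy : ℕ) + 2 = k → C jy ∉ T) := by
    have e3z := e3 z hzmem
    rw [hn iz] at e3z
    rcases Nat.lt_or_ge k 2 with hk1 | hk2
    · refine ⟨s.erase z, le_refl _, ?_, ?_, ?_⟩
      · have hbP1z : b P₁ z = 1 := hP1 iz (by omega)
        rw [hbP1z] at e3z; linarith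
      · intro d hd hdT; exact absurd hd hdT
      · intro jy hjy; omega
    · set iy : Fin k := ⟨k-2, by omega⟩ with hiy
      have hiyval : (iy : ℕ) = k - 2 := rfl
      set y := C iy with hy
      have hyz : y ≠ z := by
        intro hEq
        have := hinj hEq
        rw [Fin.ext_iff, hiyval, hizval] at this
        omega
      have hymem : y ∈ s.erase z := Finset.mem_erase.2 ⟨hyz, hmem iy⟩
      refine ⟨(s.erase z).erase y, Finset.erase_subset _ _, ?_, ?_, ?_⟩
      · have hsum : n y * b y z + ∑ c ∈ (s.erase z).erase y, n c * b c z
            = ∑ c ∈ s.erase z, n c * b c z :=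
          Finset.add_sum_erase _ (fun c => n c * b c z) hymem
        have hby : b y z = 1 := hadj iy iz (by rw [hiyval, hizval]; omega)
        have hny : n y = 1 := hn iy
        have hbP1z : b P₁ z = 0 := by
          have hC0 : C ⟨0, by omega⟩ = c₀ := by
            apply u1 _ (hmem _)
            rw [hsymm, hP1 ⟨0, by omega⟩ rfl]; norm_num
          have hzc0 : z ≠ c₀ := by
            rw [← hC0, hz]
            intro hEq
            have := hinj hEq
            rw [Fin.ext_iff, hizval] at this
            simp at this; omega
          by_contra hb
          rw [hsymm] at hb
          exact hzc0 (u1 z hzmem hb)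
        rw [hbP1z, ← hsum, hby, hny] at e3z
        linarith
      · intro d hd hdT
        have hdy : d = y := by
          by_contra hne
          exact hdT (Finset.mem_erase.2 ⟨hne, hd⟩)
        exact ⟨iy, by rw [hiyval]; omega, hdy⟩
      · intro jy hjy
        have : jy = iy := by rw [Fin.ext_iff, hiyval]; omega
        rw [this]
        exact fun hmem' => (Finset.notMem_erase _ _) hmem'
  obtain ⟨T, hTsub, hres, hTout, hTy⟩ := main
  have hTs : ∀ c ∈ T, c ∈ s := fun c hc => Finset.mem_of_mem_erase (hTsub hc)
  have hTz : ∀ c ∈ T, c ≠ z := fun c hc => (Finset.mem_erase.1 (hTsub hc)).1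
  have hP₂T : P₂ ∉ T := fun h => hP₂s (hTs _ h)
  set f : α → ℤ := fun c => if c = P₂ then b P₂ z else n c * b c z with hf
  have hfsum : ∑ c ∈ insert P₂ T, f c = 1 := by
    rw [Finset.sum_insert hP₂T]
    have h1 : f P₂ = b P₂ z := by simp [hf]
    have h2 : ∑ c ∈ T, f c = ∑ c ∈ T, n c * b c z :=
      Finset.sum_congr rfl fun c hc => if_neg (fun (h : c = P₂) => hP₂T (h ▸ hc))
    rw [h1, h2]; exact hres
  have hfnn : ∀ a ∈ insert P₂ T, 0 ≤ f a := by
    intro a ha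
    rcases Finset.mem_insert.1 ha with h | haT
    · rw [h]; simpa [hf] using hnn P₂ z hzP₂
    · have haP₂ : a ≠ P₂ := fun (h : a = P₂) => hP₂T (h ▸ haT)
      simp only [hf, if_neg haP₂]
      exact mul_nonneg (le_trans zero_le_one (hn1 a (hTs _ haT))) (hnn a z (hTz _ haT))
  obtain ⟨a, haI, hfa, hother⟩ := extract_one _ f hfnn hfsum
  have hothersT : ∀ c ∈ T, c ≠ a → b c z = 0 := by
    intro c hc hca
    have h0 := hother c (Finset.mem_insert_of_mem hc) hca
    rw [hf] at h0
    simp only [if_neg (fun (h : c = P₂) => hP₂T (h ▸ hc))] at h0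
    rcases mul_eq_zero.1 h0 with h | h
    · have := hn1 c (hTs _ hc); omega
    · exact h
  rcases Finset.mem_insert.1 haI with ha2 | haT
  · -- terminal case
    have hbP2z : b P₂ z = 1 := by rw [← ha2]; simpa [hf, ha2] using hfa
    left
    intro i hi
    have hiiz : i = iz := by rw [Fin.ext_iff, hizval]; exact hi
    subst hiiz
    rw [← hz]
    refine ⟨hbP2z, ?_⟩
    intro d hd hdC
    have hdz : d ≠ z := hdC iz
    have hdmem : d ∈ s.erase z := Finset.mem_erase.2 ⟨hdz, hd⟩
    by_cases hdT : d ∈ T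
    · refine hothersT d hdT (fun hda : d = a => ?_)
      rw [ha2] at hda
      exact hP₂s (hda ▸ hd)
    · obtain ⟨jy, _, hdjy⟩ := hTout d hdmem hdT
      exact absurd hdjy (hdC jy)
  · -- extension case
    right
    have haz : a ≠ z := hTz _ haT
    have has : a ∈ s := hTs _ haT
    have haP₂ : a ≠ P₂ := fun h => hP₂T (h ▸ haT)
    have hfa' : n a * b a z = 1 := by
      rw [hf] at hfa; simpa [if_neg haP₂] using hfa
    have hna : n a = 1 ∧ b a z = 1 := by
      rcases Int.mul_eq_one_iff_eq_one_or_neg_one.1 hfa' with ⟨h1, h2⟩ | ⟨h1, h2⟩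
      · exact ⟨h1, h2⟩
      · have := hn1 a has; omega
    have hbP2z : b P₂ z = 0 := by
      have h0 := hother P₂ (Finset.mem_insert_self _ _) (fun h => haP₂ h.symm)
      simpa [hf] using h0
    have hanotC : ∀ i, C i ≠ a := by
      intro i hia
      have hiiz : i ≠ iz := by
        intro hEq; rw [hEq, ← hz] at hia; exact haz hia.symm
      have hival : (i : ℕ) ≠ k - 1 := fun h => hiiz (by rw [Fin.ext_iff, hizval]; exact h)
      by_cases hik : (i : ℕ) + 1 < k
      · have hbza : b z (C i) ≠ 0 := by
          rw [hia, hsymm, hna.2]; norm_num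
        obtain ⟨j, hj, hzj⟩ := hclosed i hik z hzmem (fun h => haz (h ▸ hia).symm) hbza
        have hjiz : j = iz := hinj (hz ▸ hzj.symm)
        rw [hjiz, hizval] at hj
        rcases hj with h | h
        · omega
        · -- (i:ℕ)+1 = k-1, so i = iy, a = C i ∉ T
          exact (hTy i (by omega)) (hia ▸ haT)
      · have := i.isLt; omega
    refine ⟨Fin.snoc C a, injective_snoc C a hinj hanotC, ?_, ?_, ?_, ?_, ?_, ?_⟩
    · -- membership
      intro i
      by_cases hik : (i : ℕ) < k
      · have : i = Fin.castSucc ⟨(i : ℕ), hik⟩ := by rw [Fin.ext_iff]; rfl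
        rw [this, Fin.snoc_castSucc]; exact hmem _
      · have : i = Fin.last k := by rw [Fin.ext_iff]; simp; omega
        rw [this, Fin.snoc_last]; exact has
    · -- multiplicity
      intro i
      by_cases hik : (i : ℕ) < k
      · have : i = Fin.castSucc ⟨(i : ℕ), hik⟩ := by rw [Fin.ext_iff]; rfl
        rw [this, Fin.snoc_castSucc]; exact hn _
      · have : i = Fin.last k := by rw [Fin.ext_iff]; simp; omega
        rw [this, Fin.snoc_last]; exact hna.1
    · -- P₁
      intro i hi0
      have hik : (i : ℕ) < k := by omega
      have : i = Fin.castSucc ⟨(i : ℕ), hik⟩ := by rw [Fin.ext_iff]; rfl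
      rw [this, Fin.snoc_castSucc]
      exact hP1 _ hi0
    · -- P₂
      intro i hik1
      have hik : (i : ℕ) < k := by omega
      have hcast : i = Fin.castSucc ⟨(i : ℕ), hik⟩ := by rw [Fin.ext_iff]; rfl
      rw [hcast, Fin.snoc_castSucc]
      by_cases h' : (i : ℕ) + 1 < k
      · exact hP2 _ h'
      · have : (⟨(i : ℕ), hik⟩ : Fin k) = iz := by rw [Fin.ext_iff, hizval]; simp; omega
        rw [this, ← hz]; exact hbP2z
    · -- adjacency
      intro i j hij
      have hik : (i : ℕ) < k := by have := j.isLt; omega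
      have hcast : i = Fin.castSucc ⟨(i : ℕ), hik⟩ := by rw [Fin.ext_iff]; rfl
      rw [hcast, Fin.snoc_castSucc]
      by_cases hjk : (j : ℕ) < k
      · have hcastj : j = Fin.castSucc ⟨(j : ℕ), hjk⟩ := by rw [Fin.ext_iff]; rfl
        rw [hcastj, Fin.snoc_castSucc]
        exact hadj _ _ hij
      · have : j = Fin.last k := by rw [Fin.ext_iff]; simp; omega
        rw [this, Fin.snoc_last]
        have hjval : (j : ℕ) = k := by have := j.isLt; omega
        have : (⟨(i : ℕ), hik⟩ : Fin k) = iz := by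
          rw [Fin.ext_iff, hizval]; simp; omega
        rw [this, ← hz, hsymm]; exact hna.2
    · -- closedness
      intro i hik1 d hd hdne hbd
      have hik : (i : ℕ) < k := by omega
      have hcast : i = Fin.castSucc ⟨(i : ℕ), hik⟩ := by rw [Fin.ext_iff]; rfl
      rw [hcast, Fin.snoc_castSucc] at hdne hbd
      by_cases h' : (i : ℕ) + 1 < k
      · obtain ⟨j, hj, hdj⟩ := hclosed _ h' d hd hdne hbd
        refine ⟨j.castSucc, ?_, by rw [Fin.snoc_castSucc]; exact hdj⟩
        simpa using hj
      · -- i corresponds to iz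
        have hii : (⟨(i : ℕ), hik⟩ : Fin k) = iz := by
          rw [Fin.ext_iff, hizval]; simp; omega
        rw [hii, ← hz] at hdne hbd
        by_cases hda : d = a
        · refine ⟨Fin.last k, Or.inr ?_, by rw [Fin.snoc_last]; exact hda⟩
          simp; omega
        · by_cases hdT : d ∈ T
          · exact absurd (hothersT d hdT hda) hbd
          · obtain ⟨jy, hjy2, hdjy⟩ := hTout d (Finset.mem_erase.2 ⟨hdne, hd⟩) hdT
            refine ⟨jy.castSucc, Or.inl ?_, by rw [Fin.snoc_castSucc]; exact hdjy⟩
            simp; omega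

lemma chain_core {α : Type} [DecidableEq α] (b : α → α → ℤ) (n : α → ℤ) (s : Finset α)
    (P₁ P₂ : α) (hP₁s : P₁ ∉ s) (hP₂s : P₂ ∉ s)
    (hsymm : ∀ c c', b c c' = b c' c)
    (hnn : ∀ c c', c ≠ c' → 0 ≤ b c c')
    (hn1 : ∀ c ∈ s, 1 ≤ n c)
    (e1 : ∑ c ∈ s, n c * b c P₁ = 1)
    (e2 : ∑ c ∈ s, n c * b c P₂ = 1)
    (e3 : ∀ C ∈ s, b P₁ C + b P₂ C + ∑ c ∈ s.erase C, n c * b c C = 2 * n C)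
    (hconn : ∀ t : Finset α, t ⊆ insert P₁ (insert P₂ s) → t.Nonempty →
        t ≠ insert P₁ (insert P₂ s) →
        ∃ c ∈ t, ∃ c', c' ∈ insert P₁ (insert P₂ s) ∧ c' ∉ t ∧ b c c' ≠ 0) :
    ∃ (k : ℕ) (_ : 0 < k) (C : Fin k → α),
      Function.Injective C ∧
      s = Finset.image C Finset.univ ∧
      (∀ i, n (C i) = 1) ∧
      (∀ i : Fin k, b P₁ (C i) = if (i : ℕ) = 0 then 1 else 0) ∧
      (∀ i : Fin k, b P₂ (C i) = if (i : ℕ) = k - 1 then 1 else 0) ∧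
      (∀ i j : Fin k, i ≠ j →
        b (C i) (C j) = if (i : ℕ) + 1 = j ∨ (j : ℕ) + 1 = i then 1 else 0) := by
  -- extraction for P₁ and P₂
  have hnnP1 : ∀ c ∈ s, 0 ≤ n c * b c P₁ := fun c hc =>
    mul_nonneg (le_trans zero_le_one (hn1 c hc)) (hnn c P₁ (fun h => hP₁s (h ▸ hc)))
  have hnnP2 : ∀ c ∈ s, 0 ≤ n c * b c P₂ := fun c hc =>
    mul_nonneg (le_trans zero_le_one (hn1 c hc)) (hnn c P₂ (fun h => hP₂s (h ▸ hc)))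
  obtain ⟨c₀, hc₀s, hc₀prod, hc₀others⟩ := extract_one s (fun c => n c * b c P₁) hnnP1 e1
  obtain ⟨z₀, hz₀s, hz₀prod, hz₀others⟩ := extract_one s (fun c => n c * b c P₂) hnnP2 e2
  have hc₀ : n c₀ = 1 ∧ b c₀ P₁ = 1 := by
    rcases Int.mul_eq_one_iff_eq_one_or_neg_one.1 hc₀prod with h | h
    · exact h
    · have := hn1 c₀ hc₀s; omega
  have hz₀ : n z₀ = 1 ∧ b z₀ P₂ = 1 := by
    rcases Int.mul_eq_one_iff_eq_one_or_neg_one.1 hz₀prod with h | h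
    · exact h
    · have := hn1 z₀ hz₀s; omega
  have u1 : ∀ c ∈ s, b c P₁ ≠ 0 → c = c₀ := by
    intro c hc hb
    by_contra h
    have h0 := hc₀others c hc h
    rcases mul_eq_zero.1 h0 with h' | h'
    · have := hn1 c hc; omega
    · exact hb h'
  have u2 : ∀ c ∈ s, b c P₂ ≠ 0 → c = z₀ := by
    intro c hc hb
    by_contra h
    have h0 := hz₀others c hc h
    rcases mul_eq_zero.1 h0 with h' | h'
    · have := hn1 c hc; omega
    · exact hb h'
  -- initialization
  have hpart1 : PartialChain b n s P₁ P₂ 1 (fun _ => c₀) := by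
    refine ⟨fun i j _ => Subsingleton.elim i j, fun _ => hc₀s, fun _ => hc₀.1, ?_, ?_, ?_, ?_⟩
    · intro i _; rw [hsymm]; exact hc₀.2
    · intro i hi; have := i.isLt; omega
    · intro i j hij; have := i.isLt; have := j.isLt; omega
    · intro i hi; have := i.isLt; omega
  -- fuel induction
  have main : ∀ (N k : ℕ) (C : Fin k → α), 0 < k → s.card ≤ k + N →
      PartialChain b n s P₁ P₂ k C →
      ∃ (k' : ℕ) (C' : Fin k' → α), 0 < k' ∧ PartialChain b n s P₁ P₂ k' C' ∧
        (∀ i : Fin k', (i : ℕ) = k' - 1 → b P₂ (C' i) = 1 ∧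
          ∀ d ∈ s, (∀ j, d ≠ C' j) → b d (C' i) = 0) := by
    intro N
    induction N with
    | zero =>
      intro k C hk hcard hpart
      rcases chain_step b n s P₁ P₂ c₀ hP₁s hP₂s hsymm hnn hn1 e3 u1 k hk C hpart with
        hterm | ⟨C', hC'⟩
      · exact ⟨k, C, hk, hpart, hterm⟩
      · exfalso
        have hle : (Finset.univ : Finset (Fin (k+1))).card ≤ s.card :=
          Finset.card_le_card_of_injOn C' (fun i _ => hC'.2.1 i)
            (fun i _ j _ h => hC'.1 h)
        simp [Finset.card_univ] at hle
        omega
    | succ N ih =>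
      intro k C hk hcard hpart
      rcases chain_step b n s P₁ P₂ c₀ hP₁s hP₂s hsymm hnn hn1 e3 u1 k hk C hpart with
        hterm | ⟨C', hC'⟩
      · exact ⟨k, C, hk, hpart, hterm⟩
      · exact ih (k+1) C' (by omega) (by omega) hC'
  obtain ⟨k, C, hk, hpart, hterm⟩ := main s.card 1 (fun _ => c₀) one_pos (by omega) hpart1
  obtain ⟨hinj, hmem, hn', hP1, hP2, hadj, hclosed⟩ := hpart
  set iz : Fin k := ⟨k-1, by omega⟩ with hiz
  have hizval : (iz : ℕ) = k - 1 := rfl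
  obtain ⟨hbP2z, houtz⟩ := hterm iz hizval
  have hC0 : C ⟨0, hk⟩ = c₀ := by
    apply u1 _ (hmem _)
    rw [hsymm, hP1 ⟨0, hk⟩ rfl]; norm_num
  have hCz : C iz = z₀ := by
    apply u2 _ (hmem _)
    rw [hsymm, hbP2z]; norm_num
  -- coverage via connectivity
  have hcover : ∀ c ∈ s, ∃ i, C i = c := by
    intro c hcs
    by_contra hno
    push_neg at hno
    set t : Finset α := insert P₁ (insert P₂ (Finset.image C Finset.univ)) with ht
    have htsub : t ⊆ insert P₁ (insert P₂ s) := by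
      intro x hx
      rcases Finset.mem_insert.1 hx with rfl | hx
      · exact Finset.mem_insert_self _ _
      rcases Finset.mem_insert.1 hx with rfl | hx
      · exact Finset.mem_insert_of_mem (Finset.mem_insert_self _ _)
      · obtain ⟨i, _, rfl⟩ := Finset.mem_image.1 hx
        exact Finset.mem_insert_of_mem (Finset.mem_insert_of_mem (hmem i))
    have htne : t ≠ insert P₁ (insert P₂ s) := by
      intro hEq
      have hct : c ∈ t := by
        rw [hEq]
        exact Finset.mem_insert_of_mem (Finset.mem_insert_of_mem hcs)
      rcases Finset.mem_insert.1 hct with rfl | hct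
      · exact hP₁s hcs
      rcases Finset.mem_insert.1 hct with rfl | hct
      · exact hP₂s hcs
      · obtain ⟨i, _, hi⟩ := Finset.mem_image.1 hct
        exact hno i hi
    obtain ⟨x, hxt, x', hx'full, hx't, hbxx'⟩ :=
      hconn t htsub ⟨P₁, Finset.mem_insert_self _ _⟩ htne
    have hx'P1 : x' ≠ P₁ := fun h => hx't (h ▸ Finset.mem_insert_self _ _)
    have hx'P2 : x' ≠ P₂ :=
      fun h => hx't (h ▸ Finset.mem_insert_of_mem (Finset.mem_insert_self _ _))
    have hx's : x' ∈ s := by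
      rcases Finset.mem_insert.1 hx'full with h | h
      · exact absurd h hx'P1
      rcases Finset.mem_insert.1 h with h' | h'
      · exact absurd h' hx'P2
      · exact h'
    have hx'img : ∀ i, x' ≠ C i := by
      intro i h
      exact hx't (by
        rw [ht, h]
        exact Finset.mem_insert_of_mem (Finset.mem_insert_of_mem
          (Finset.mem_image.2 ⟨i, Finset.mem_univ i, rfl⟩)))
    rcases Finset.mem_insert.1 hxt with rfl | hxt
    · -- x = P₁
      have := u1 x' hx's (by rw [hsymm]; exact hbxx')
      rw [← hC0] at this
      exact hx'img _ this
    rcases Finset.mem_insert.1 hxt with rfl | hxt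
    · -- x = P₂
      have := u2 x' hx's (by rw [hsymm]; exact hbxx')
      rw [← hCz] at this
      exact hx'img _ this
    · obtain ⟨i, _, rfl⟩ := Finset.mem_image.1 hxt
      by_cases hik : (i : ℕ) + 1 < k
      · obtain ⟨j, _, hj⟩ := hclosed i hik x' hx's (hx'img i)
          (by rw [hsymm]; exact hbxx')
        exact hx'img j hj
      · have hii : i = iz := by
          rw [Fin.ext_iff, hizval]
          have := i.isLt; omega
        rw [hii] at hbxx'
        exact hbxx' (by rw [hsymm]; exact houtz x' hx's hx'img)
  have himage : s = Finset.image C Finset.univ := by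
    apply Finset.Subset.antisymm
    · intro c hc
      obtain ⟨i, rfl⟩ := hcover c hc
      exact Finset.mem_image.2 ⟨i, Finset.mem_univ i, rfl⟩
    · intro x hx
      obtain ⟨i, _, rfl⟩ := Finset.mem_image.1 hx
      exact hmem i
  -- off-chain intersections vanish
  have key : ∀ i j : Fin k, (i : ℕ) < (j : ℕ) →
      b (C i) (C j) = if (i : ℕ) + 1 = (j : ℕ) then 1 else 0 := by
    intro i j hij
    by_cases ha : (i : ℕ) + 1 = (j : ℕ)
    · rw [if_pos ha]; exact hadj i j ha
    · rw [if_neg ha]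
      have hik : (i : ℕ) + 1 < k := by have := j.isLt; omega
      have hCij : C j ≠ C i := by
        intro h
        have := hinj h
        rw [Fin.ext_iff] at this
        omega
      by_contra hb
      have hb' : b (C j) (C i) ≠ 0 := by rw [hsymm]; exact hb
      obtain ⟨j', hj', hjj'⟩ := hclosed i hik (C j) (hmem j) hCij hb'
      have hjeq : j = j' := hinj hjj'
      rw [← hjeq] at hj'
      rcases hj' with h | h <;> omega
  refine ⟨k, hk, C, hinj, himage, hn', ?_, ?_, ?_⟩
  · intro i
    by_cases h0 : (i : ℕ) = 0
    · rw [if_pos h0]; exact hP1 i h0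
    · rw [if_neg h0]
      by_contra hb
      have := u1 (C i) (hmem i) (by rw [hsymm]; exact hb)
      rw [← hC0] at this
      have := hinj this
      rw [Fin.ext_iff] at this
      simp at this
      omega
  · intro i
    by_cases h0 : (i : ℕ) = k - 1
    · rw [if_pos h0]
      have : i = iz := by rw [Fin.ext_iff, hizval]; exact h0
      rw [this]; exact hbP2z
    · rw [if_neg h0]
      exact hP2 i (by have := i.isLt; omega)
  · intro i j hij
    have hvne : (i : ℕ) ≠ (j : ℕ) := fun h => hij (Fin.ext h)
    rcases Nat.lt_or_ge (i : ℕ) (j : ℕ) with h | h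
    · have h2 : ¬((j : ℕ) + 1 = (i : ℕ)) := by omega
      rw [key i j h]
      by_cases ha : (i : ℕ) + 1 = (j : ℕ) <;> simp [ha, h2]
    · have hlt : (j : ℕ) < (i : ℕ) := by omega
      have h2 : ¬((i : ℕ) + 1 = (j : ℕ)) := by omega
      rw [hsymm, key j i hlt]
      by_cases ha : (j : ℕ) + 1 = (i : ℕ) <;> simp [ha, h2]


/-- Let `D = P₁ + P₂ + Σ nᵢCᵢ` be a connected fiber of a conic
bundle, where `P₁ ≠ P₂` are `(−1)`-curves which do not meet and the `Cᵢ` are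
`(−2)`-curves.  Then the intersection graph of `D` is a chain
`P₁, C₁, …, C_k, P₂` with all multiplicities `nᵢ = 1` (type `Aₙ`, `n ≥ 3`). -/
theorem stmt_12 (S : RES) (P₁ P₂ : S.Curve) (D' : S.Curve →₀ ℤ)
    (hne : P₁ ≠ P₂) (hP₁ : S.Neg1 P₁) (hP₂ : S.Neg1 P₂)
    (hnomeet : S.b P₁ P₂ = 0)
    (hD'eff : (0 : S.Curve →₀ ℤ) ≤ D')
    (hD'neg2 : ∀ c ∈ D'.support, S.Neg2 c)
    (hP₁out : P₁ ∉ D'.support) (hP₂out : P₂ ∉ D'.support)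
    (hconic : S.ConicClass (Finsupp.single P₁ 1 + Finsupp.single P₂ 1 + D'))
    (hconn : S.Connected (Finsupp.single P₁ 1 + Finsupp.single P₂ 1 + D')) :
    ∃ (k : ℕ) (_ : 0 < k) (C : Fin k → S.Curve),
      Function.Injective C ∧
      D'.support = Finset.image C Finset.univ ∧
      (∀ i, D' (C i) = 1) ∧
      (∀ i : Fin k, S.b P₁ (C i) = if (i : ℕ) = 0 then 1 else 0) ∧
      (∀ i : Fin k, S.b P₂ (C i) = if (i : ℕ) = k - 1 then 1 else 0) ∧
      (∀ i j : Fin k, i ≠ j →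
        S.b (C i) (C j) = if (i : ℕ) + 1 = j ∨ (j : ℕ) + 1 = i then 1 else 0) := by
  classical
  set Dd : S.Curve →₀ ℤ := Finsupp.single P₁ 1 + Finsupp.single P₂ 1 + D' with hDd
  obtain ⟨hnef, hDD, _⟩ := hconic
  have hadd : ∀ (E F : S.Curve →₀ ℤ) c, dcur S.b (E + F) c = dcur S.b E c + dcur S.b F c :=
    fun E F c => Finsupp.sum_add_index' (fun a => zero_mul _) (fun a m₁ m₂ => add_mul _ _ _)
  have hsingle : ∀ (P c : S.Curve), dcur S.b (Finsupp.single P (1:ℤ)) c = S.b P c := by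
    intro P c; simp [dcur, Finsupp.sum_single_index]
  have hdD : ∀ c, dcur S.b Dd c = S.b P₁ c + S.b P₂ c + dcur S.b D' c := by
    intro c; rw [hDd, hadd, hadd, hsingle, hsingle]
  have hD'0 : ∀ c, 0 ≤ D' c := by
    rw [Finsupp.le_def] at hD'eff
    intro c; simpa using hD'eff c
  have hD'P₁ : D' P₁ = 0 := Finsupp.notMem_support_iff.1 hP₁out
  have hD'P₂ : D' P₂ = 0 := Finsupp.notMem_support_iff.1 hP₂out
  have hDdapp : ∀ c, Dd c = (if P₁ = c then 1 else 0) + (if P₂ = c then 1 else 0) + D' c := by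
    intro c
    rw [hDd, Finsupp.add_apply, Finsupp.add_apply, Finsupp.single_apply, Finsupp.single_apply]
  have hsupp : Dd.support = insert P₁ (insert P₂ D'.support) := by
    ext c
    simp only [Finsupp.mem_support_iff, Finset.mem_insert]
    constructor
    · intro hc
      by_cases h1 : c = P₁
      · exact Or.inl h1
      by_cases h2 : c = P₂
      · exact Or.inr (Or.inl h2)
      · refine Or.inr (Or.inr ?_)
        intro hD'c
        apply hc
        rw [hDdapp c, hD'c, if_neg (fun h => h1 h.symm), if_neg (fun h => h2 h.symm)]
        norm_num
    · intro h
      rcases h with rfl | rfl | h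
      · rw [hDdapp, if_pos rfl, if_neg (Ne.symm hne), hD'P₁]; norm_num
      · rw [hDdapp, if_neg hne, if_pos rfl, hD'P₂]; norm_num
      · have h1 : c ≠ P₁ := fun hEq => hP₁out (hEq ▸ Finsupp.mem_support_iff.2 h)
        have h2 : c ≠ P₂ := fun hEq => hP₂out (hEq ▸ Finsupp.mem_support_iff.2 h)
        rw [hDdapp, if_neg (fun hh => h1 hh.symm), if_neg (fun hh => h2 hh.symm)]
        simpa using h
  have hDd0 : ∀ c, 0 ≤ Dd c := by
    intro c
    rw [hDdapp c]
    have := hD'0 c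
    split_ifs <;> omega
  have hdc0 : ∀ c ∈ Dd.support, dcur S.b Dd c = 0 := by
    have hpair : dpair S.b Dd Dd = ∑ x ∈ Dd.support, Dd x * dcur S.b Dd x := rfl
    rw [hpair] at hDD
    have hterm := (Finset.sum_eq_zero_iff_of_nonneg
      (fun c _ => mul_nonneg (hDd0 c) (hnef c))).1 hDD
    intro c hc
    have h := hterm c hc
    have hDdc : Dd c ≠ 0 := Finsupp.mem_support_iff.1 hc
    rcases mul_eq_zero.1 h with h' | h'
    · exact absurd h' hDdc
    · exact h'
  have hdcurD' : ∀ c, dcur S.b D' c = ∑ x ∈ D'.support, D' x * S.b x c := fun c => rfl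
  have e1 : ∑ c ∈ D'.support, D' c * S.b c P₁ = 1 := by
    have hP₁mem : P₁ ∈ Dd.support := by rw [hsupp]; exact Finset.mem_insert_self _ _
    have h := hdc0 P₁ hP₁mem
    rw [hdD P₁, hP₁.2, (by rw [S.symm]; exact hnomeet : S.b P₂ P₁ = 0), hdcurD'] at h
    linarith
  have e2 : ∑ c ∈ D'.support, D' c * S.b c P₂ = 1 := by
    have hP₂mem : P₂ ∈ Dd.support := by
      rw [hsupp]; exact Finset.mem_insert_of_mem (Finset.mem_insert_self _ _)
    have h := hdc0 P₂ hP₂mem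
    rw [hdD P₂, hP₂.2, hnomeet, hdcurD'] at h
    linarith
  have e3 : ∀ c ∈ D'.support,
      S.b P₁ c + S.b P₂ c + ∑ x ∈ D'.support.erase c, D' x * S.b x c = 2 * D' c := by
    intro c hc
    have hcmem : c ∈ Dd.support := by
      rw [hsupp]; exact Finset.mem_insert_of_mem (Finset.mem_insert_of_mem hc)
    have h := hdc0 c hcmem
    have hsplit : D' c * S.b c c + ∑ x ∈ D'.support.erase c, D' x * S.b x c
        = ∑ x ∈ D'.support, D' x * S.b x c :=
      Finset.add_sum_erase _ (fun x => D' x * S.b x c) hc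
    rw [hdD c, hdcurD', ← hsplit, (hD'neg2 c hc).2] at h
    linarith
  have hn1 : ∀ c ∈ D'.support, 1 ≤ D' c := by
    intro c hc
    have h1 := hD'0 c
    have h2 := Finsupp.mem_support_iff.1 hc
    omega
  have hconnC : ∀ t : Finset S.Curve, t ⊆ insert P₁ (insert P₂ D'.support) → t.Nonempty →
      t ≠ insert P₁ (insert P₂ D'.support) →
      ∃ c ∈ t, ∃ c', c' ∈ insert P₁ (insert P₂ D'.support) ∧ c' ∉ t ∧ S.b c c' ≠ 0 := by
    intro t h1 h2 h3
    rw [← hsupp] at h1 h3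
    obtain ⟨c, hct, c', hc1, hc2, hc3⟩ := hconn t h1 h2 h3
    exact ⟨c, hct, c', by rw [← hsupp]; exact hc1, hc2, hc3⟩
  exact chain_core S.b (fun c => D' c) D'.support P₁ P₂ hP₁out hP₂out S.symm S.nonneg
    hn1 e1 e2 e3 hconnC
end
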